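/- arXiv:1102.3603 — 9 statements merged into one kernel-verified Lean document; each statement's English description precedes it below -/
import Mathlib

section
/- Let V be a finite type and E : Fin m → Sym2 V a multigraph on V. Define the GF(2)-linear map F : (V → ZMod 2) → (Fin m → ZMod 2) whose e-th coordinate at P equals P v if E e is a loop at v, and equals P u + P v if E e = s(u,v) with u ≠ v. Then F is injective if and only if G is decodable, i.e., every vertex of V is connected in G to some vertex at which there is a loop. -/
/-- `e` is a loop index at vertex `v`. -/
def IsLoopIdx {V : Type*} {m : ℕ} (E : Fin m → Sym2 V) (v : V) (e : Fin m) : Prop :=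
  E e = Sym2.diag v

/-- `u` and `v` are connected in the multigraph `E` with the edge indices in `S` deleted. -/
def ConnectedMod {V : Type*} {m : ℕ} (E : Fin m → Sym2 V) (S : Finset (Fin m))
    (u v : V) : Prop :=
  Relation.EqvGen (fun a b => ∃ e : Fin m, e ∉ S ∧ E e = s(a, b)) u v

/-- `G − S` is decodable: every vertex is connected in `G − S` to a vertex with a loop
outside `S`. -/
def DecodableMod {V : Type*} {m : ℕ} (E : Fin m → Sym2 V) (S : Finset (Fin m)) : Prop :=
  ∀ u : V, ∃ v : V, (∃ e : Fin m, e ∉ S ∧ IsLoopIdx E v e) ∧ ConnectedMod E S u v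

def IsDecodable {V : Type*} {m : ℕ} (E : Fin m → Sym2 V) : Prop :=
  DecodableMod E ∅

/-- `c_x^G`: the number of `x`-element sets of edge indices whose deletion leaves a
decodable graph. -/
noncomputable def cG {V : Type*} {m : ℕ} (E : Fin m → Sym2 V) (x : ℕ) : ℕ :=
  Set.ncard {S : Finset (Fin m) | S.card = x ∧ DecodableMod E S}

/-- `k_x^G = C(m,x) − c_x^G`. -/
noncomputable def kG {V : Type*} {m : ℕ} (E : Fin m → Sym2 V) (x : ℕ) : ℕ :=
  Nat.choose m x - cG E x

/-- `m(G)`: the minimum cardinality of a loop cut. -/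
noncomputable def mCut {V : Type*} {m : ℕ} (E : Fin m → Sym2 V) : ℕ :=
  sInf {k : ℕ | ∃ S : Finset (Fin m), S.card = k ∧ ¬ DecodableMod E S}

/-- incidence degree of `v` (a loop at `v` counts once). -/
noncomputable def dI {V : Type*} {m : ℕ} (E : Fin m → Sym2 V) (v : V) : ℕ :=
  Set.ncard {e : Fin m | v ∈ E e}

/-- `δ_I(G)`: the minimum incidence degree. -/
noncomputable def deltaI {V : Type*} {m : ℕ} (E : Fin m → Sym2 V) : ℕ :=
  sInf (Set.range (dI E))

/-- `L_G`: the number of loop indices. -/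
noncomputable def LG {V : Type*} {m : ℕ} (E : Fin m → Sym2 V) : ℕ :=
  Set.ncard {e : Fin m | ∃ v : V, E e = Sym2.diag v}

/-- `δ_ℓ(v)`: the number of loop indices at `v`. -/
noncomputable def loopsAt {V : Type*} {m : ℕ} (E : Fin m → Sym2 V) (v : V) : ℕ :=
  Set.ncard {e : Fin m | E e = Sym2.diag v}

/-- `Δ_ℓ(G)`: the maximum number of loops at a single vertex. -/
noncomputable def DeltaLoops {V : Type*} {m : ℕ} (E : Fin m → Sym2 V) : ℕ :=
  sSup (Set.range (loopsAt E))

/-- `κ_G`: the edge connectivity. -/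
noncomputable def kappaG {V : Type*} {m : ℕ} (E : Fin m → Sym2 V) : ℕ :=
  sInf {k : ℕ | ∃ S : Finset (Fin m), S.card = k ∧ ∃ u v : V, ¬ ConnectedMod E S u v}

open Classical in
/-- The GF(2)-linear encoding map: the `e`-th coordinate of `F P` is `P v` if `E e` is a
loop at `v`, and `P u + P v` if `E e = s(u,v)` with `u ≠ v`. -/
noncomputable def encMap {V : Type*} {m : ℕ} (E : Fin m → Sym2 V)
    (P : V → ZMod 2) (e : Fin m) : ZMod 2 :=
  Sym2.lift ⟨fun a b => if a = b then P a else P a + P b, fun a b => by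
    by_cases h : a = b
    · subst h; simp
    · simp [h, Ne.symm h, add_comm]⟩ (E e)

/-! `encMap E` is additive, so it is injective iff its kernel is trivial. Over `ZMod 2` a
kernel vector is a function that is constant along every edge and vanishes at every loop, i.e.
constant on components and zero on components containing a loop. Such functions all vanish iff
every component contains a loop; otherwise the indicator of a loop-free component is a nonzero
kernel vector. -/

lemma encMap_loop {V : Type*} {m : ℕ} {E : Fin m → Sym2 V} (P : V → ZMod 2)
    {e : Fin m} {a : V} (h : E e = s(a, a)) : encMap E P e = P a := by
  simp [encMap, h]

lemma encMap_of_ne {V : Type*} {m : ℕ} {E : Fin m → Sym2 V} (P : V → ZMod 2)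
    {e : Fin m} {a b : V} (h : E e = s(a, b)) (hab : a ≠ b) :
    encMap E P e = P a + P b := by
  simp [encMap, h, hab]

lemma encMap_add {V : Type*} {m : ℕ} (E : Fin m → Sym2 V) (P Q : V → ZMod 2) :
    encMap E (P + Q) = encMap E P + encMap E Q := by
  funext e
  induction h : E e using Sym2.ind with
  | h a b =>
    by_cases hab : a = b
    · subst hab
      simp only [encMap_loop _ h, Pi.add_apply]
    · simp only [encMap_of_ne _ h hab, Pi.add_apply]
      ring

noncomputable def encHom {V : Type*} {m : ℕ} (E : Fin m → Sym2 V) :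
    (V → ZMod 2) →+ (Fin m → ZMod 2) :=
  AddMonoidHom.mk' (encMap E) (encMap_add E)

lemma encMap_eq_zero_iff {V : Type*} {m : ℕ} (E : Fin m → Sym2 V) (P : V → ZMod 2) :
    encMap E P = 0 ↔
      (∀ e v, E e = s(v, v) → P v = 0) ∧ ∀ e a b, E e = s(a, b) → P a = P b := by
  constructor
  · intro hP
    refine ⟨fun e v h => by rw [← encMap_loop P h, hP, Pi.zero_apply], fun e a b h => ?_⟩
    by_cases hab : a = b
    · rw [hab]
    · rw [← CharTwo.add_eq_zero, ← encMap_of_ne P h hab, hP, Pi.zero_apply]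
  · rintro ⟨hloop, hedge⟩
    funext e
    induction h : E e using Sym2.ind with
    | h a b =>
      by_cases hab : a = b
      · subst hab
        rw [encMap_loop P h, hloop e a h, Pi.zero_apply]
      · rw [encMap_of_ne P h hab, hedge e a b h, CharTwo.add_self_eq_zero, Pi.zero_apply]

lemma ConnectedMod.of_edge {V : Type*} {m : ℕ} {E : Fin m → Sym2 V} {S : Finset (Fin m)}
    {e : Fin m} {a b : V} (he : e ∉ S) (h : E e = s(a, b)) : ConnectedMod E S a b :=
  Relation.EqvGen.rel _ _ ⟨e, he, h⟩

lemma ConnectedMod.refl {V : Type*} {m : ℕ} {E : Fin m → Sym2 V} {S : Finset (Fin m)}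
    (a : V) : ConnectedMod E S a a :=
  Relation.EqvGen.refl a

lemma ConnectedMod.trans {V : Type*} {m : ℕ} {E : Fin m → Sym2 V} {S : Finset (Fin m)}
    {a b c : V} (hab : ConnectedMod E S a b) (hbc : ConnectedMod E S b c) :
    ConnectedMod E S a c :=
  Relation.EqvGen.trans _ _ _ hab hbc

lemma ConnectedMod.symm {V : Type*} {m : ℕ} {E : Fin m → Sym2 V} {S : Finset (Fin m)}
    {a b : V} (hab : ConnectedMod E S a b) : ConnectedMod E S b a :=
  Relation.EqvGen.symm _ _ hab

lemma ConnectedMod.eq_of_forall_edge {V α : Type*} {m : ℕ} {E : Fin m → Sym2 V}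
    {S : Finset (Fin m)} {P : V → α} (hP : ∀ e a b, e ∉ S → E e = s(a, b) → P a = P b)
    {u v : V} (huv : ConnectedMod E S u v) : P u = P v := by
  induction huv with
  | rel a b h => obtain ⟨e, he, hab⟩ := h; exact hP e a b he hab
  | refl => rfl
  | symm _ _ _ ih => exact ih.symm
  | trans _ _ _ _ _ ih₁ ih₂ => exact ih₁.trans ih₂

lemma exists_encMap_eq_zero_of_no_loop {V : Type*} {m : ℕ} (E : Fin m → Sym2 V) (u : V)
    (hu : ∀ v, ConnectedMod E ∅ u v → ∀ e, ¬ IsLoopIdx E v e) :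
    ∃ P : V → ZMod 2, P u ≠ 0 ∧ encMap E P = 0 := by
  classical
  refine ⟨fun v => if ConnectedMod E ∅ u v then 1 else 0, by
    simp [ConnectedMod.refl u], ?_⟩
  rw [encMap_eq_zero_iff]
  refine ⟨fun e v h => if_neg fun huv => hu v huv e h, fun e a b h => ?_⟩
  have hab : ConnectedMod E ∅ a b := .of_edge (Finset.notMem_empty e) h
  simp only [show ConnectedMod E ∅ u a ↔ ConnectedMod E ∅ u b from
    ⟨fun h => h.trans hab, fun h => h.trans hab.symm⟩]

theorem stmt0_general {V : Type*} {m : ℕ} (E : Fin m → Sym2 V) :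
    Function.Injective (encMap E) ↔ IsDecodable E := by
  rw [show encMap E = encHom E from rfl, injective_iff_map_eq_zero]
  constructor
  · intro hinj u
    by_contra! hu
    obtain ⟨P, hPu, hP⟩ :=
      exists_encMap_eq_zero_of_no_loop E u fun v huv e he => hu v ⟨e, by simp, he⟩ huv
    exact hPu (congrFun (hinj P hP) u)
  · intro hdec P hP
    obtain ⟨hloop, hedge⟩ := (encMap_eq_zero_iff E P).1 hP
    funext w
    obtain ⟨v, ⟨e, -, hv⟩, hwv⟩ := hdec w
    exact (hwv.eq_of_forall_edge fun e a b _ => hedge e a b).trans (hloop e v hv)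

theorem stmt0 {V : Type*} [Fintype V] {m : ℕ} (E : Fin m → Sym2 V) :
    Function.Injective (encMap E) ↔ IsDecodable E :=
  stmt0_general E
end

section
/- Let V be a finite type with n = Fintype.card V and E : Fin m → Sym2 V a multigraph on V. If G is decodable, then m ≥ n. -/
namespace Relation

theorem exists_rank_of_forall_reflTransGen {α : Type*} {r : α → α → Prop} {P : α → Prop}
    (h : ∀ a, ∃ b, ReflTransGen r a b ∧ P b) :
    ∃ d : α → ℕ, ∀ a, ¬ P a → ∃ c, r a c ∧ d c < d a := by
  classical
  have hchain : ∀ a, ∃ n, ∃ l : List α, l.length = n ∧ (a :: l).IsChain r ∧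
      P ((a :: l).getLast (List.cons_ne_nil _ _)) := fun a => by
    obtain ⟨b, hab, hb⟩ := h a
    obtain ⟨l, hl, rfl⟩ := List.exists_isChain_cons_of_relationReflTransGen hab
    exact ⟨l.length, l, rfl, hl, hb⟩
  refine ⟨fun a => Nat.find (hchain a), fun a ha => ?_⟩
  obtain ⟨l, hlen, hl, hP⟩ := Nat.find_spec (hchain a)
  cases l with
  | nil => exact absurd hP ha
  | cons c l =>
    rw [List.isChain_cons_cons] at hl
    rw [List.getLast_cons_cons] at hP
    refine ⟨c, hl.1, (Nat.find_le ⟨l, rfl, hl.2, hP⟩).trans_lt ?_⟩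
    simp only [← hlen, List.length_cons, Nat.lt_succ_self]

end Relation

theorem Sym2.mk_apply_injective_of_rank {α : Type*} {f : α → α} (d : α → ℕ)
    (hf : ∀ a, f a = a ∨ d (f a) < d a) : Function.Injective fun a => s(a, f a) := by
  intro a b hab
  rcases Sym2.eq_iff.mp hab with ⟨h, -⟩ | ⟨hab, hba⟩
  · exact h
  · by_contra hne
    have h1 := (hf a).resolve_left (hba ▸ Ne.symm hne)
    have h2 := (hf b).resolve_left (hab ▸ hne)
    rw [hba] at h1
    rw [← hab] at h2
    omega

section Decodable

variable {V : Type*} {m : ℕ} {E : Fin m → Sym2 V}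

open Relation in
theorem IsDecodable.exists_reflTransGen_loop (h : IsDecodable E) (u : V) :
    ∃ v, ReflTransGen (Sym2.ToRel (Set.range E)) u v ∧ Sym2.ToRel (Set.range E) v v := by
  obtain ⟨v, ⟨e, -, he⟩, huv⟩ := h u
  refine ⟨v, ?_, e, he⟩
  rw [← EqvGen.eqvGen_eq_reflTransGen]
  exact huv.mono fun a b ⟨e, _, he⟩ => ⟨e, he⟩

theorem IsDecodable.exists_rank_edge_descent (h : IsDecodable E) :
    ∃ d : V → ℕ, ∀ v, ∃ c, s(v, c) ∈ Set.range E ∧ (c = v ∨ d c < d v) := by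
  obtain ⟨d, hd⟩ := Relation.exists_rank_of_forall_reflTransGen h.exists_reflTransGen_loop
  refine ⟨d, fun v => ?_⟩
  by_cases hv : Sym2.ToRel (Set.range E) v v
  · exact ⟨v, hv, Or.inl rfl⟩
  · obtain ⟨c, hc, hlt⟩ := hd v hv
    exact ⟨c, hc, Or.inr hlt⟩

end Decodable

theorem stmt2 {V : Type*} [Fintype V] {m : ℕ} (E : Fin m → Sym2 V)
    (hdec : IsDecodable E) :
    Fintype.card V ≤ m := by
  obtain ⟨d, hd⟩ := hdec.exists_rank_edge_descent
  choose f hf hfd using hd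
  choose e he using hf
  have he_inj : Function.Injective e := fun u v huv =>
    Sym2.mk_apply_injective_of_rank d hfd (by simpa only [he] using congrArg E huv)
  simpa using Fintype.card_le_of_injective e he_inj
end

section
/- Let V be a finite type with n = Fintype.card V and E : Fin m → Sym2 V a multigraph on V. For any finite set S of edge indices, if G−S is decodable then S.card ≤ m − n. Consequently c_x^G = 0 for every x > m − n. -/
/-!
Orient every vertex of a decodable `G − S` towards a loop: a vertex with a loop outside `S` picks
such a loop, any other vertex picks the first edge of a shortest walk to a looped vertex. Distinct
vertices pick distinct surviving edges, since the chosen edge determines its vertex as its endpoint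
farther from the loops. Hence `n ≤ m - |S|`.
-/

section

variable {V : Type*} {m : ℕ} {E : Fin m → Sym2 V} {S : Finset (Fin m)}

/-- `ReachesLoopIn E S k u`: some walk of length `k` in `G − S` leads from `u` to a vertex carrying
a loop outside `S`. -/
def ReachesLoopIn (E : Fin m → Sym2 V) (S : Finset (Fin m)) : ℕ → V → Prop
  | 0, u => ∃ e, e ∉ S ∧ IsLoopIdx E u e
  | k + 1, u => ∃ v, (∃ e, e ∉ S ∧ E e = s(u, v)) ∧ ReachesLoopIn E S k v

lemma ConnectedMod.exists_reachesLoopIn_iff {u v : V} (h : ConnectedMod E S u v) :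
    (∃ k, ReachesLoopIn E S k u) ↔ ∃ k, ReachesLoopIn E S k v := by
  induction h with
  | rel a b hab =>
    obtain ⟨e, heS, hab⟩ := hab
    exact ⟨fun ⟨k, hk⟩ => ⟨k + 1, a, ⟨e, heS, hab.trans Sym2.eq_swap⟩, hk⟩,
      fun ⟨k, hk⟩ => ⟨k + 1, b, ⟨e, heS, hab⟩, hk⟩⟩
  | refl => exact Iff.rfl
  | symm _ _ _ ih => exact ih.symm
  | trans _ _ _ _ _ ih₁ ih₂ => exact ih₁.trans ih₂

lemma DecodableMod.exists_reachesLoopIn (hS : DecodableMod E S) (u : V) :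
    ∃ k, ReachesLoopIn E S k u := by
  obtain ⟨v, ⟨e, heS, hloop⟩, huv⟩ := hS u
  exact huv.exists_reachesLoopIn_iff.2 ⟨0, e, heS, hloop⟩

def IsDescentEdge (d : V → ℕ) (u : V) (z : Sym2 V) : Prop :=
  z = Sym2.diag u ∨ ∃ v, z = s(u, v) ∧ d v < d u

lemma IsDescentEdge.mem {d : V → ℕ} {u : V} {z : Sym2 V} (h : IsDescentEdge d u z) : u ∈ z := by
  obtain rfl | ⟨v, rfl, -⟩ := h
  exacts [Sym2.mem_iff.2 (Or.inl rfl), Sym2.mem_mk_left u v]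

lemma IsDescentEdge.unique {d : V → ℕ} {u u' : V} {z : Sym2 V} (h : IsDescentEdge d u z)
    (h' : IsDescentEdge d u' z) : u = u' := by
  rcases h with rfl | ⟨v, rfl, hv⟩
  · exact (Sym2.mem_iff.1 h'.mem).elim Eq.symm Eq.symm
  rcases h' with hz | ⟨v', hz, hv'⟩
  · exact (Sym2.mem_iff.1 (show u ∈ Sym2.diag u' from hz ▸ Sym2.mem_mk_left u v)).elim id id
  rcases Sym2.eq_iff.1 hz with ⟨rfl, -⟩ | ⟨rfl, rfl⟩
  · rfl
  · omega

/-- The height `d` is the length of a shortest walk to a looped vertex. -/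
lemma DecodableMod.exists_descentEdge (hS : DecodableMod E S) :
    ∃ d : V → ℕ, ∀ u, ∃ e, e ∉ S ∧ IsDescentEdge d u (E e) := by
  classical
  refine ⟨fun u => Nat.find (hS.exists_reachesLoopIn u), fun u => ?_⟩
  have hu := Nat.find_spec (hS.exists_reachesLoopIn u)
  generalize hk : Nat.find (hS.exists_reachesLoopIn u) = k at hu
  cases k with
  | zero =>
    obtain ⟨e, heS, hloop⟩ := hu
    exact ⟨e, heS, Or.inl hloop⟩
  | succ k =>
    obtain ⟨v, ⟨e, heS, he⟩, hv⟩ := hu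
    refine ⟨e, heS, Or.inr ⟨v, he, ?_⟩⟩
    beta_reduce
    rw [hk]
    exact Nat.lt_succ_of_le (Nat.find_le hv)

lemma DecodableMod.card_le_card_compl [Fintype V] (hS : DecodableMod E S) :
    Fintype.card V ≤ Sᶜ.card := by
  obtain ⟨d, hd⟩ := hS.exists_descentEdge
  choose f hfS hf using hd
  have hinj : Function.Injective f := fun u u' h => (hf u).unique (h ▸ hf u')
  rw [← Finset.card_univ]
  exact Finset.card_le_card_of_injOn f (fun u _ => Finset.mem_compl.2 (hfS u)) hinj.injOn

lemma DecodableMod.card_le [Fintype V] (hS : DecodableMod E S) :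
    S.card ≤ m - Fintype.card V := by
  have hcompl := hS.card_le_card_compl
  have hS_le := S.card_le_univ
  rw [Finset.card_compl, Fintype.card_fin] at hcompl
  rw [Fintype.card_fin] at hS_le
  omega

end

theorem stmt3 {V : Type*} [Fintype V] {m : ℕ} (E : Fin m → Sym2 V) :
    (∀ S : Finset (Fin m), DecodableMod E S → S.card ≤ m - Fintype.card V) ∧
      (∀ x : ℕ, m - Fintype.card V < x → cG E x = 0) := by
  refine ⟨fun S hS => hS.card_le, fun x hx => ?_⟩
  suffices {S : Finset (Fin m) | S.card = x ∧ DecodableMod E S} = ∅ by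
    rw [cG, this, Set.ncard_empty]
  refine Set.eq_empty_iff_forall_notMem.2 fun S ⟨hcard, hS⟩ => ?_
  have := hS.card_le
  omega
end

section
/- Let V be a nonempty finite type with n = Fintype.card V and E : Fin m → Sym2 V a multigraph on V. If G is decodable, then n · δ_I(G) < 2m, where δ_I(G) is the minimum incidence degree of G. -/
/-! Summing incidence degrees counts every edge once per endpoint, so `∑ v, d_I(v) ≤ 2m`;
the inequality is strict because a decodable graph on a nonempty vertex set has a loop, which
has only one endpoint. Bounding each `d_I(v)` below by `δ_I(G)` gives the claim. -/

open Finset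

theorem dI_eq_card_filter {V : Type*} [DecidableEq V] {m : ℕ} (E : Fin m → Sym2 V) (v : V) :
    dI E v = #{e | v ∈ E e} := by
  rw [dI, ← Set.ncard_coe_finset, coe_filter]
  simp only [mem_univ, true_and]

theorem card_mul_deltaI_le_sum_dI {V : Type*} [Fintype V] {m : ℕ} (E : Fin m → Sym2 V) :
    Fintype.card V * deltaI E ≤ ∑ v, dI E v := by
  rw [← smul_eq_mul, ← card_univ, ← sum_const]
  exact sum_le_sum fun v _ => Nat.sInf_le ⟨v, rfl⟩

theorem sum_dI_eq_sum_card_toFinset {V : Type*} [Fintype V] [DecidableEq V] {m : ℕ}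
    (E : Fin m → Sym2 V) : ∑ v, dI E v = ∑ e, #(E e).toFinset := by
  simp_rw [dI_eq_card_filter, card_filter]
  rw [sum_comm]
  refine sum_congr rfl fun e _ => ?_
  rw [← card_filter]
  congr 1
  ext v
  simp [Sym2.mem_toFinset]

theorem sum_dI_lt_two_mul_of_isLoopIdx {V : Type*} [Fintype V] {m : ℕ} (E : Fin m → Sym2 V)
    {v : V} {e : Fin m} (hloop : IsLoopIdx E v e) : ∑ v, dI E v < 2 * m := by
  classical
  have hcard_le (e : Fin m) : #(E e).toFinset ≤ 2 := by
    rw [Sym2.card_toFinset]; split <;> omega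
  have hcard_loop : #(E e).toFinset < 2 := by
    rw [Sym2.card_toFinset_of_isDiag _ (hloop ▸ Sym2.diag_isDiag v)]; omega
  calc ∑ v, dI E v = ∑ e, #(E e).toFinset := sum_dI_eq_sum_card_toFinset E
    _ < ∑ _e : Fin m, 2 := sum_lt_sum (fun e _ => hcard_le e) ⟨e, mem_univ e, hcard_loop⟩
    _ = 2 * m := by simp [mul_comm]

theorem IsDecodable.exists_isLoopIdx {V : Type*} [Nonempty V] {m : ℕ} {E : Fin m → Sym2 V}
    (hdec : IsDecodable E) : ∃ v e, IsLoopIdx E v e := by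
  obtain ⟨v, ⟨e, -, hloop⟩, -⟩ := hdec (Classical.arbitrary V)
  exact ⟨v, e, hloop⟩

theorem stmt5 {V : Type*} [Fintype V] [Nonempty V] {m : ℕ} (E : Fin m → Sym2 V)
    (hdec : IsDecodable E) :
    Fintype.card V * deltaI E < 2 * m := by
  obtain ⟨v, e, hloop⟩ := hdec.exists_isLoopIdx
  exact (card_mul_deltaI_le_sum_dI E).trans_lt (sum_dI_lt_two_mul_of_isLoopIdx E hloop)
end

section
/- Let V be a nonempty finite type with n = Fintype.card V and E : Fin m → Sym2 V a multigraph on V. If G is decodable, then (n + 1) · m(G) ≤ 2m, where m(G) is the minimum cardinality of a loop cut of G. -/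
/-!
Deleting all edges incident to a vertex `v` leaves `v` isolated and loopless, and deleting
all loops leaves no loop at all; both are loop cuts, so `m(G) ≤ d_I(v)` for every `v` and
`m(G) ≤ L_G`. Adding these `n + 1` bounds gives `(n + 1) m(G) ≤ ∑ᵥ d_I(v) + L_G = 2m`: a
non-loop edge is incident to two vertices, while a loop is counted once among the incidences
and once among the loops.
-/

open Finset

section LoopCut

open scoped Classical

variable {V : Type*} {m : ℕ} (E : Fin m → Sym2 V)

lemma mCut_le_card_of_not_decodableMod {S : Finset (Fin m)} (hS : ¬ DecodableMod E S) :
    mCut E ≤ S.card :=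
  Nat.sInf_le ⟨S, rfl, hS⟩

lemma ConnectedMod.eq_iff_eq_of_incident_subset {S : Finset (Fin m)} {v a b : V}
    (hv : ∀ e, v ∈ E e → e ∈ S) (h : ConnectedMod E S a b) : a = v ↔ b = v := by
  induction h with
  | rel a b hab =>
    obtain ⟨e, heS, he⟩ := hab
    constructor <;> rintro rfl <;> exact absurd (hv e (by simp [he])) heS
  | refl => rfl
  | symm _ _ _ ih => exact ih.symm
  | trans _ _ _ _ _ ih₁ ih₂ => exact ih₁.trans ih₂

lemma dI_eq_card_filter_s6 (v : V) : dI E v = (univ.filter fun e => v ∈ E e).card := by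
  rw [dI, Set.ncard_eq_toFinset_card', Set.toFinset_ofPred]

lemma not_decodableMod_incident (v : V) :
    ¬ DecodableMod E (univ.filter fun e => v ∈ E e) := by
  intro hdec
  have hv : ∀ e, v ∈ E e → e ∈ univ.filter fun e => v ∈ E e := by simp
  obtain ⟨w, ⟨e, heS, hloop⟩, hconn⟩ := hdec v
  obtain rfl : w = v := (ConnectedMod.eq_iff_eq_of_incident_subset E hv hconn).mp rfl
  exact heS (hv e (by simp [show E e = _ from hloop, Sym2.diag]))

lemma mCut_le_dI (v : V) : mCut E ≤ dI E v := by
  rw [dI_eq_card_filter_s6]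
  exact mCut_le_card_of_not_decodableMod E (not_decodableMod_incident E v)

variable [Fintype V]

lemma LG_eq_card_filter : LG E = (univ.filter fun e => ∃ v, E e = Sym2.diag v).card := by
  rw [LG, Set.ncard_eq_toFinset_card', Set.toFinset_ofPred]

lemma not_decodableMod_loops [Nonempty V] :
    ¬ DecodableMod E (univ.filter fun e => ∃ v, E e = Sym2.diag v) := fun hdec =>
  have ⟨w, ⟨_, heS, hloop⟩, _⟩ := hdec (Classical.arbitrary V)
  heS (mem_filter.mpr ⟨mem_univ _, w, hloop⟩)

lemma mCut_le_LG [Nonempty V] : mCut E ≤ LG E := by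
  rw [LG_eq_card_filter]
  exact mCut_le_card_of_not_decodableMod E (not_decodableMod_loops E)

end LoopCut

lemma Sym2.card_filter_mem_add_ite_isDiag {V : Type*} [Fintype V] [DecidableEq V]
    (z : Sym2 V) : (univ.filter (· ∈ z)).card + (if z.IsDiag then 1 else 0) = 2 := by
  have : univ.filter (· ∈ z) = z.toFinset := by ext; simp [Sym2.mem_toFinset]
  rw [this, Sym2.card_toFinset]
  split_ifs <;> rfl

lemma sum_dI_add_LG {V : Type*} [Fintype V] {m : ℕ} (E : Fin m → Sym2 V) :
    ∑ v, dI E v + LG E = 2 * m := by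
  classical
  have hdiag : ∀ e, (∃ v, E e = Sym2.diag v) ↔ (E e).IsDiag := fun e => by
    rw [← Sym2.mem_diagSet, ← Sym2.range_diag, Set.mem_range, exists_congr fun _ => eq_comm]
  simp only [dI_eq_card_filter_s6, LG_eq_card_filter, card_filter, hdiag]
  rw [sum_comm, ← sum_add_distrib]
  simp only [← card_filter, Sym2.card_filter_mem_add_ite_isDiag, sum_const, card_univ,
    Fintype.card_fin, smul_eq_mul, mul_comm]

theorem stmt6_general {V : Type*} [Fintype V] [Nonempty V] {m : ℕ} (E : Fin m → Sym2 V) :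
    (Fintype.card V + 1) * mCut E ≤ 2 * m := by
  have hdI : Fintype.card V * mCut E ≤ ∑ v, dI E v := by
    simpa using sum_le_sum fun v (_ : v ∈ univ) => mCut_le_dI E v
  calc (Fintype.card V + 1) * mCut E = Fintype.card V * mCut E + mCut E := by ring
    _ ≤ ∑ v, dI E v + LG E := Nat.add_le_add hdI (mCut_le_LG E)
    _ = 2 * m := sum_dI_add_LG E

theorem stmt6 {V : Type*} [Fintype V] [Nonempty V] {m : ℕ} (E : Fin m → Sym2 V)
    (hdec : IsDecodable E) :
    (Fintype.card V + 1) * mCut E ≤ 2 * m :=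
  stmt6_general E
end

section
/- Let V be a finite type with Fintype.card V ≥ 2 and E : Fin m → Sym2 V a multigraph on V that is decodable and connected (every two vertices are connected in G−∅). If κ_G ≤ L_G, then κ_G ≤ m(G), where κ_G is the edge-connectivity of G, L_G is the number of loop indices, and m(G) is the minimum cardinality of a loop cut of G. -/
/-! A set `S` of fewer than `κ_G` edge indices leaves `G − S` connected, and if also
`|S| < L_G` it misses some loop; then every vertex reaches that loop, so `G − S` is decodable.
Hence, when `κ_G ≤ L_G`, every loop cut has at least `κ_G` elements. -/

section LoopCut

variable {V : Type*} {m : ℕ} (E : Fin m → Sym2 V)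

theorem kappaG_eq_zero_of_isEmpty [IsEmpty V] : kappaG E = 0 := by
  simp [kappaG]

theorem not_decodableMod_univ [Nonempty V] : ¬ DecodableMod E Finset.univ := fun h =>
  let ⟨_, ⟨e, he, _⟩, _⟩ := h (Classical.arbitrary V)
  he (Finset.mem_univ e)

theorem exists_card_eq_mCut [Nonempty V] :
    ∃ S : Finset (Fin m), S.card = mCut E ∧ ¬ DecodableMod E S :=
  Nat.sInf_mem (s := {k | ∃ S : Finset (Fin m), S.card = k ∧ ¬ DecodableMod E S})
    ⟨m, Finset.univ, Finset.card_fin m, not_decodableMod_univ E⟩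

variable {E}

theorem connectedMod_of_card_lt_kappaG {S : Finset (Fin m)} (hS : S.card < kappaG E)
    (u v : V) : ConnectedMod E S u v := by
  by_contra h
  exact absurd (Nat.sInf_le ⟨S, rfl, u, v, h⟩ : kappaG E ≤ S.card) hS.not_ge

theorem exists_loop_not_mem_of_card_lt_LG {S : Finset (Fin m)} (hS : S.card < LG E) :
    ∃ e ∉ S, ∃ v, IsLoopIdx E v e := by
  by_contra! h
  have hsub : {e : Fin m | ∃ v : V, E e = Sym2.diag v} ⊆ S := fun e ⟨v, hv⟩ =>
    by_contra fun he => h e he v hv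
  have := Set.ncard_le_ncard hsub S.finite_toSet
  rw [Set.ncard_coe_finset] at this
  exact absurd this hS.not_ge

theorem decodableMod_of_card_lt {S : Finset (Fin m)} (hκ : S.card < kappaG E)
    (hL : S.card < LG E) : DecodableMod E S := by
  obtain ⟨e, he, v, hv⟩ := exists_loop_not_mem_of_card_lt_LG hL
  exact fun u => ⟨v, ⟨e, he, hv⟩, connectedMod_of_card_lt_kappaG hκ u v⟩

theorem kappaG_le_card_of_not_decodableMod (hkL : kappaG E ≤ LG E) {S : Finset (Fin m)}
    (hS : ¬ DecodableMod E S) : kappaG E ≤ S.card := by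
  by_contra! h
  exact hS (decodableMod_of_card_lt h (h.trans_le hkL))

end LoopCut

theorem stmt9_general {V : Type*} {m : ℕ}
    (E : Fin m → Sym2 V)
    (hkL : kappaG E ≤ LG E) :
    kappaG E ≤ mCut E := by
  cases isEmpty_or_nonempty V
  · simp only [kappaG_eq_zero_of_isEmpty, zero_le]
  · obtain ⟨S, hS, hcut⟩ := exists_card_eq_mCut E
    exact hS ▸ kappaG_le_card_of_not_decodableMod hkL hcut

theorem stmt9 {V : Type*} [Fintype V] {m : ℕ} (hV : 2 ≤ Fintype.card V)
    (E : Fin m → Sym2 V) (hdec : IsDecodable E)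
    (hconn : ∀ u v : V, ConnectedMod E ∅ u v)
    (hkL : kappaG E ≤ LG E) :
    kappaG E ≤ mCut E :=
  stmt9_general E hkL
end

section
/- Let V be a finite type and E : Fin m → Sym2 V a multigraph on V. Then for all natural numbers x and z, k^G_{x+z} · C(x + z, z) ≥ k^G_x · C(m − x, z), where k^G_x = C(m,x) − c^G_x. -/
/-! Deleting more edges never restores decodability, so the index sets `S` with `G − S` not
decodable form an up-set. For any up-set, double counting the pairs `S ⊆ T` with `|S| = x` and
`|T| = x + z` gives the inequality: each such `S` lies in exactly `C(m − x, z)` sets `T`, all of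
them in the up-set, and each `T` contains at most `C(x + z, z)` sets `S`. -/

open Finset

theorem card_filter_powersetCard_mul_choose_le {α : Type*} [Fintype α] [DecidableEq α]
    {p : Finset α → Prop} [DecidablePred p] (hp : Monotone p) (x z : ℕ) :
    #{S ∈ powersetCard x univ | p S} * (Fintype.card α - x).choose z ≤
      #{T ∈ powersetCard (x + z) univ | p T} * (x + z).choose z := by
  set 𝒜 : Finset (Finset α) := {S ∈ powersetCard x univ | p S}
  set ℬ : Finset (Finset α) := {T ∈ powersetCard (x + z) univ | p T}
  refine card_mul_le_card_mul (· ⊆ ·) (fun S hS => ?_) (fun T hT => ?_)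
  · rw [mem_filter, mem_powersetCard_univ] at hS
    have hsupersets : ℬ.bipartiteAbove (· ⊆ ·) S = (powersetCard (x + z) univ).filter (S ⊆ ·) := by
      ext T
      simp only [ℬ, mem_bipartiteAbove, mem_filter, and_assoc]
      exact and_congr_right fun _ => ⟨And.right, fun hST => ⟨hp hST hS.2, hST⟩⟩
    rw [hsupersets, card_filter_powersetCard_subset S univ _ (subset_univ S) (by omega),
      card_univ, hS.1, add_tsub_cancel_left]
  · rw [mem_filter, mem_powersetCard_univ] at hT
    calc #(𝒜.bipartiteBelow (· ⊆ ·) T)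
        ≤ #(T.powersetCard x) := card_le_card fun S hS => by
          simp only [𝒜, mem_bipartiteBelow, mem_filter, mem_powersetCard_univ] at hS
          exact mem_powersetCard.2 ⟨hS.2, hS.1.1⟩
      _ = (x + z).choose z := by rw [card_powersetCard, hT.1, Nat.choose_symm_add]

theorem decodableMod_antitone {V : Type*} {m : ℕ} (E : Fin m → Sym2 V) :
    Antitone (DecodableMod E) := by
  intro S S' hSS' hd u
  obtain ⟨v, ⟨e, he, hloop⟩, huv⟩ := hd u
  exact ⟨v, ⟨e, fun heS => he (hSS' heS), hloop⟩,
    huv.mono fun _ _ ⟨e, he, hab⟩ => ⟨e, fun heS => he (hSS' heS), hab⟩⟩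

open scoped Classical in
theorem kG_eq_card_filter_not_decodableMod {V : Type*} {m : ℕ} (E : Fin m → Sym2 V) (x : ℕ) :
    kG E x = #{S ∈ powersetCard x univ | ¬ DecodableMod E S} := by
  have hcG : cG E x = #{S ∈ powersetCard x univ | DecodableMod E S} := by
    rw [cG, ← Set.ncard_coe_finset]
    congr 1
    ext S
    simp [and_comm]
  have hsplit : #{S ∈ powersetCard x univ | DecodableMod E S} +
      #{S ∈ powersetCard x univ | ¬ DecodableMod E S} = m.choose x := by
    rw [card_filter_add_card_filter_not, card_powersetCard, card_univ, Fintype.card_fin]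
  rw [kG, hcG]
  omega

theorem stmt14_general {V : Type*} {m : ℕ} (E : Fin m → Sym2 V) :
    ∀ x z : ℕ, kG E (x + z) * Nat.choose (x + z) z ≥ kG E x * Nat.choose (m - x) z := by
  classical
  intro x z
  have hbad : Monotone fun S => ¬ DecodableMod E S :=
    fun _ _ hST => mt (decodableMod_antitone E hST)
  have h := card_filter_powersetCard_mul_choose_le hbad x z
  rw [Fintype.card_fin] at h
  rwa [kG_eq_card_filter_not_decodableMod, kG_eq_card_filter_not_decodableMod]

theorem stmt14 {V : Type*} [Fintype V] {m : ℕ} (E : Fin m → Sym2 V) :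
    ∀ x z : ℕ, kG E (x + z) * Nat.choose (x + z) z ≥ kG E x * Nat.choose (m - x) z :=
  stmt14_general E
end

section
/- Let V be a finite type and E : Fin m → Sym2 V a decodable multigraph on V. Then the map sending each vertex v to the set of edge indices incident with v, i.e. v ↦ {e : Fin m | v ∈ E e}, is injective: distinct vertices are never incident with exactly the same set of edges. -/
/-! If `u ≠ v` are incident with the same edges, every edge meeting `{u, v}` is `s(u, v)`, so
`{u, v}` is closed under adjacency. The loop reachable from `u` then lies at `u` or `v`, hence is
`s(u, v)` itself, forcing `u = v`. -/

theorem ConnectedMod.iff_of_forall_edge {V : Type*} {m : ℕ} {E : Fin m → Sym2 V}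
    {S : Finset (Fin m)} {P : V → Prop}
    (hP : ∀ e ∉ S, ∀ a b, E e = s(a, b) → (P a ↔ P b)) {u v : V} (huv : ConnectedMod E S u v) :
    P u ↔ P v := by
  induction huv with
  | rel a b hab => obtain ⟨e, he, hab⟩ := hab; exact hP e he a b hab
  | refl => rfl
  | symm _ _ _ ih => exact ih.symm
  | trans _ _ _ _ _ ih₁ ih₂ => exact ih₁.trans ih₂

section SameIncidence

variable {V : Type*} {m : ℕ} {E : Fin m → Sym2 V} {u v : V}

theorem eq_mk_of_incidence_eq (hne : u ≠ v) (hinc : ∀ e, u ∈ E e ↔ v ∈ E e) {e : Fin m} {x : V}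
    (hx : x ∈ s(u, v)) (hxe : x ∈ E e) : E e = s(u, v) := by
  have hu : u ∈ E e := by
    rcases Sym2.mem_iff.mp hx with rfl | rfl
    exacts [hxe, (hinc e).mpr hxe]
  exact (Sym2.mem_and_mem_iff hne).mp ⟨hu, (hinc e).mp hu⟩

theorem mem_mk_iff_of_edge (hne : u ≠ v) (hinc : ∀ e, u ∈ E e ↔ v ∈ E e) {e : Fin m} {a b : V}
    (hab : E e = s(a, b)) : a ∈ s(u, v) ↔ b ∈ s(u, v) := by
  constructor
  · intro ha
    rw [← eq_mk_of_incidence_eq hne hinc ha (hab ▸ Sym2.mem_mk_left a b), hab]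
    exact Sym2.mem_mk_right a b
  · intro hb
    rw [← eq_mk_of_incidence_eq hne hinc hb (hab ▸ Sym2.mem_mk_right a b), hab]
    exact Sym2.mem_mk_left a b

end SameIncidence

theorem stmt17_general {V : Type*} {m : ℕ} (E : Fin m → Sym2 V)
    (hdec : IsDecodable E) :
    Function.Injective (fun v : V => {e : Fin m | v ∈ E e}) := by
  intro u v h
  by_contra hne
  have hinc : ∀ e, u ∈ E e ↔ v ∈ E e := fun e => Set.ext_iff.mp h e
  obtain ⟨w, ⟨e, -, hloop⟩, huw⟩ := hdec u
  have hw : w ∈ s(u, v) :=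
    (huw.iff_of_forall_edge fun _ _ _ _ => mem_mk_iff_of_edge hne hinc).mp (Sym2.mem_mk_left u v)
  have hdiag : (E e).IsDiag := hloop ▸ Sym2.diag_isDiag w
  rw [eq_mk_of_incidence_eq hne hinc hw (by rw [hloop]; exact Sym2.mem_mk_left w w)] at hdiag
  exact hne (Sym2.mk_isDiag_iff.mp hdiag)

theorem stmt17 {V : Type*} [Fintype V] {m : ℕ} (E : Fin m → Sym2 V)
    (hdec : IsDecodable E) :
    Function.Injective (fun v : V => {e : Fin m | v ∈ E e}) :=
  stmt17_general E hdec
end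

section
/- Let V₁ and V₂ be finite types, E₁ : Fin m₁ → Sym2 V₁ and E₂ : Fin m₂ → Sym2 V₂ multigraphs, and let G be the disjoint-union multigraph on V = V₁ ⊕ V₂ with m = m₁ + m₂ edges, whose edge map E : Fin (m₁ + m₂) → Sym2 (V₁ ⊕ V₂) sends the first m₁ indices e to Sym2.map Sum.inl (E₁ e) and the remaining m₂ indices e to Sym2.map Sum.inr (E₂ e). Then for every real number p, with q = 1 − p: ∑_{x=0}^{m} c_x^G · p^{m−x} · q^x = (∑_{x=0}^{m₁} c_x^{G₁} · p^{m₁−x} · q^x) · (∑_{x=0}^{m₂} c_x^{G₂} · p^{m₂−x} · q^x). -/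
/-!
Deleting a set `S` of edges of the disjoint union amounts to deleting `S ∩ G₁` from `G₁` and
`S ∩ G₂` from `G₂`, and the deleted graph is decodable iff both parts are: the edge relation of
`G − S` is the sum `Sum.LiftRel` of those of the parts, and the equivalence closure of such a
sum is the sum of the closures, so components and loops never mix. Writing the decoding
probability as a sum of `p ^ (m - |S|) (1 - p) ^ |S|` over decodable deletions `S`, the weight
is multiplicative under `S ↔ (S₁, S₂)`, so the sum factors.
-/
open Relation Finset

namespace Relation

variable {α β : Type*} {r : α → α → Prop} {s : β → β → Prop}

lemma EqvGen.map {γ : Type*} {t : γ → γ → Prop} (f : α → γ)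
    (hf : ∀ ⦃a b⦄, r a b → t (f a) (f b)) {a b : α} (h : EqvGen r a b) : EqvGen t (f a) (f b) :=
  Quot.eqvGen_exact (congrArg (Quot.map f hf) (Quot.eqvGen_sound h))

lemma eqvGen_liftRel_iff {a b : α ⊕ β} :
    EqvGen (Sum.LiftRel r s) a b ↔ Sum.LiftRel (EqvGen r) (EqvGen s) a b := by
  constructor
  · intro h
    induction h with
    | rel _ _ h => exact h.mono (fun _ _ => EqvGen.rel _ _) (fun _ _ => EqvGen.rel _ _)
    | refl a => exact Sum.LiftRel.refl _ _ a
    | symm _ _ _ ih =>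
      rcases ih with ⟨h⟩ | ⟨h⟩ <;> constructor <;> exact EqvGen.symm _ _ h
    | trans _ _ _ _ _ ih₁ ih₂ => exact Sum.LiftRel.trans _ _ ih₁ ih₂
  · rintro (⟨h⟩ | ⟨h⟩)
    · exact h.map Sum.inl fun _ _ => Sum.LiftRel.inl
    · exact h.map Sum.inr fun _ _ => Sum.LiftRel.inr

end Relation

def EveryClassHasLoop {α : Type*} (r : α → α → Prop) : Prop :=
  ∀ u, ∃ v, r v v ∧ EqvGen r u v

lemma everyClassHasLoop_liftRel_iff {α β : Type*} {r : α → α → Prop} {s : β → β → Prop} :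
    EveryClassHasLoop (Sum.LiftRel r s) ↔ EveryClassHasLoop r ∧ EveryClassHasLoop s := by
  simp only [EveryClassHasLoop, Sum.forall, Sum.exists, eqvGen_liftRel_iff, Sum.liftRel_inl_inl,
    Sum.liftRel_inr_inr, Sum.not_liftRel_inl_inr, Sum.not_liftRel_inr_inl, and_false, exists_false,
    or_false, false_or]

lemma Sym2.map_eq_mk_iff {α β : Type*} {f : α → β} {z : Sym2 α} {a b : β} :
    Sym2.map f z = s(a, b) ↔ ∃ x y, z = s(x, y) ∧ f x = a ∧ f y = b := by
  refine ⟨fun h => ?_, fun ⟨x, y, hz, hx, hy⟩ => by rw [hz, Sym2.map_mk, hx, hy]⟩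
  induction z using Sym2.ind with
  | _ x y =>
    rcases Sym2.eq_iff.mp h with ⟨rfl, rfl⟩ | ⟨rfl, rfl⟩
    exacts [⟨x, y, rfl, rfl, rfl⟩, ⟨y, x, Sym2.eq_swap, rfl, rfl⟩]

section Multigraph

variable {V V₁ V₂ : Type*} {m m₁ m₂ : ℕ}

def deletionRel (E : Fin m → Sym2 V) (S : Finset (Fin m)) (a b : V) : Prop :=
  ∃ e, e ∉ S ∧ E e = s(a, b)

lemma decodableMod_iff_everyClassHasLoop (E : Fin m → Sym2 V) (S : Finset (Fin m)) :
    DecodableMod E S ↔ EveryClassHasLoop (deletionRel E S) :=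
  Iff.rfl

def sumEdges (E₁ : Fin m₁ → Sym2 V₁) (E₂ : Fin m₂ → Sym2 V₂) :
    Fin (m₁ + m₂) → Sym2 (V₁ ⊕ V₂) :=
  fun e => Fin.addCases
    (fun i : Fin m₁ => Sym2.map Sum.inl (E₁ i))
    (fun j : Fin m₂ => Sym2.map Sum.inr (E₂ j)) e

def edgeSetSumEquiv : Finset (Fin m₁) × Finset (Fin m₂) ≃ Finset (Fin (m₁ + m₂)) :=
  Finset.sumEquiv.symm.toEquiv.trans finSumFinEquiv.finsetCongr

lemma card_edgeSetSumEquiv (A : Finset (Fin m₁)) (B : Finset (Fin m₂)) :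
    #(edgeSetSumEquiv (A, B)) = #A + #B := by
  simp [edgeSetSumEquiv, Finset.sumEquiv_symm_apply]

lemma deletionRel_sumEdges (E₁ : Fin m₁ → Sym2 V₁) (E₂ : Fin m₂ → Sym2 V₂)
    (A : Finset (Fin m₁)) (B : Finset (Fin m₂)) :
    deletionRel (sumEdges E₁ E₂) (edgeSetSumEquiv (A, B)) =
      Sum.LiftRel (deletionRel E₁ A) (deletionRel E₂ B) := by
  ext a b
  rw [deletionRel, finSumFinEquiv.symm.exists_congr_left]
  rcases a with a | a <;> rcases b with b | b <;>
    simp [edgeSetSumEquiv, Finset.sumEquiv_symm_apply, sumEdges, Sym2.map_eq_mk_iff, deletionRel]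

lemma decodableMod_sumEdges_iff (E₁ : Fin m₁ → Sym2 V₁) (E₂ : Fin m₂ → Sym2 V₂)
    (A : Finset (Fin m₁)) (B : Finset (Fin m₂)) :
    DecodableMod (sumEdges E₁ E₂) (edgeSetSumEquiv (A, B)) ↔
      DecodableMod E₁ A ∧ DecodableMod E₂ B := by
  simp only [decodableMod_iff_everyClassHasLoop, deletionRel_sumEdges,
    everyClassHasLoop_liftRel_iff]

open scoped Classical in
lemma cG_eq_card (E : Fin m → Sym2 V) (x : ℕ) :
    cG E x = #{S : Finset (Fin m) | #S = x ∧ DecodableMod E S} := by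
  rw [cG, ← Set.ncard_coe_finset]
  congr 1
  ext S
  simp

noncomputable def decodingProb (E : Fin m → Sym2 V) (p : ℝ) : ℝ :=
  ∑ x ∈ range (m + 1), (cG E x : ℝ) * p ^ (m - x) * (1 - p) ^ x

open scoped Classical in
lemma decodingProb_eq_sum (E : Fin m → Sym2 V) (p : ℝ) :
    decodingProb E p =
      ∑ S : Finset (Fin m), if DecodableMod E S then p ^ (m - #S) * (1 - p) ^ #S else 0 := by
  have hcard : ∀ S ∈ univ.filter (DecodableMod E), #S ∈ range (m + 1) := fun S _ =>
    mem_range.2 (Nat.lt_succ_of_le (card_finset_fin_le S))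
  rw [← sum_filter, ← sum_fiberwise_of_maps_to hcard, decodingProb]
  refine sum_congr rfl fun x _ => ?_
  rw [filter_filter, cG_eq_card, sum_congr rfl fun S hS => by rw [(mem_filter.1 hS).2.2],
    sum_const, nsmul_eq_mul, mul_assoc]
  simp only [and_comm]

theorem decodingProb_sumEdges (E₁ : Fin m₁ → Sym2 V₁) (E₂ : Fin m₂ → Sym2 V₂) (p : ℝ) :
    decodingProb (sumEdges E₁ E₂) p = decodingProb E₁ p * decodingProb E₂ p := by
  classical
  rw [decodingProb_eq_sum, decodingProb_eq_sum, decodingProb_eq_sum, sum_mul_sum,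
    ← Fintype.sum_prod_type', ← edgeSetSumEquiv.sum_comp]
  refine Fintype.sum_congr _ _ fun ⟨A, B⟩ => ?_
  simp only [decodableMod_sumEdges_iff, card_edgeSetSumEquiv, ite_zero_mul_ite_zero]
  have hA := card_finset_fin_le A
  have hB := card_finset_fin_le B
  rw [show m₁ + m₂ - (#A + #B) = (m₁ - #A) + (m₂ - #B) by omega]
  congr 1
  ring

end Multigraph

theorem stmt19_general {V₁ V₂ : Type*} {m₁ m₂ : ℕ}
    (E₁ : Fin m₁ → Sym2 V₁) (E₂ : Fin m₂ → Sym2 V₂)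
    (E : Fin (m₁ + m₂) → Sym2 (V₁ ⊕ V₂))
    (hE : E = fun e => Fin.addCases
      (fun i : Fin m₁ => Sym2.map Sum.inl (E₁ i))
      (fun j : Fin m₂ => Sym2.map Sum.inr (E₂ j)) e)
    (p : ℝ) :
    ∑ x ∈ Finset.range (m₁ + m₂ + 1),
        (cG E x : ℝ) * p ^ (m₁ + m₂ - x) * (1 - p) ^ x =
      (∑ x ∈ Finset.range (m₁ + 1), (cG E₁ x : ℝ) * p ^ (m₁ - x) * (1 - p) ^ x) *
        (∑ x ∈ Finset.range (m₂ + 1), (cG E₂ x : ℝ) * p ^ (m₂ - x) * (1 - p) ^ x) := by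
  subst hE
  exact decodingProb_sumEdges E₁ E₂ p

theorem stmt19 {V₁ V₂ : Type*} [Fintype V₁] [Fintype V₂] {m₁ m₂ : ℕ}
    (E₁ : Fin m₁ → Sym2 V₁) (E₂ : Fin m₂ → Sym2 V₂)
    (E : Fin (m₁ + m₂) → Sym2 (V₁ ⊕ V₂))
    (hE : E = fun e => Fin.addCases
      (fun i : Fin m₁ => Sym2.map Sum.inl (E₁ i))
      (fun j : Fin m₂ => Sym2.map Sum.inr (E₂ j)) e)
    (p : ℝ) :
    ∑ x ∈ Finset.range (m₁ + m₂ + 1),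
        (cG E x : ℝ) * p ^ (m₁ + m₂ - x) * (1 - p) ^ x =
      (∑ x ∈ Finset.range (m₁ + 1), (cG E₁ x : ℝ) * p ^ (m₁ - x) * (1 - p) ^ x) *
        (∑ x ∈ Finset.range (m₂ + 1), (cG E₂ x : ℝ) * p ^ (m₂ - x) * (1 - p) ^ x) :=
  stmt19_general E₁ E₂ E hE p
end
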